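/- arXiv:2410.20661 — 4 statements merged into one kernel-verified Lean document; each statement's English description precedes it below -/
import Mathlib

section
/- Let φ : K → G be a fibrewise bijective groupoid homomorphism (i.e., φ_u : K_u → G_{φ(u)} is bijective for every unit u of K). Then for all subsets U, V of G, one has φ⁻¹(UV) = φ⁻¹(U)·φ⁻¹(V), where UV denotes the set of products uv over composable pairs u ∈ U, v ∈ V. -/
/-- A groupoid structure on the type `A` of arrows, following the definition with a
unit space `unit ⊆ A`, domain and range maps `d, r`, a multiplication (total function,
only constrained on composable pairs) and an inverse map. -/
structure Gpd (A : Type*) where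
  unit : Set A
  d : A → A
  r : A → A
  mul : A → A → A
  inv : A → A
  d_mem : ∀ g, d g ∈ unit
  r_mem : ∀ g, r g ∈ unit
  d_unit : ∀ u ∈ unit, d u = u
  r_unit : ∀ u ∈ unit, r u = u
  left_unit : ∀ g, mul (r g) g = g
  right_unit : ∀ g, mul g (d g) = g
  r_mul : ∀ g' g, d g' = r g → r (mul g' g) = r g'
  d_mul : ∀ g' g, d g' = r g → d (mul g' g) = d g
  mul_assoc : ∀ g'' g' g, d g'' = r g' → d g' = r g →
    mul g'' (mul g' g) = mul (mul g'' g') g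
  d_inv : ∀ g, d (inv g) = r g
  r_inv : ∀ g, r (inv g) = d g
  mul_inv : ∀ g, mul g (inv g) = r g
  inv_mul : ∀ g, mul (inv g) g = d g

namespace Gpd

variable {A B C : Type*}

/-- The fiber `G_u` over a point `u`: arrows with domain `u`. -/
def fiber (G : Gpd A) (u : A) : Set A := {g | G.d g = u}

/-- The product `UV` of two subsets of a groupoid: products over composable pairs. -/
def setMul (G : Gpd A) (U V : Set A) : Set A :=
  {g | ∃ u ∈ U, ∃ v ∈ V, G.d u = G.r v ∧ g = G.mul u v}

/-- The inverse `U⁻¹` of a subset of a groupoid. -/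
def setInv (G : Gpd A) (U : Set A) : Set A := G.inv '' U

/-- A subset of a groupoid is a bisection if both `d` and `r` are injective on it. -/
def IsBisection (G : Gpd A) (U : Set A) : Prop :=
  Set.InjOn G.d U ∧ Set.InjOn G.r U

/-- A groupoid homomorphism: sends composable pairs to composable pairs and
preserves the multiplication. -/
def IsHom (K : Gpd A) (G : Gpd B) (φ : A → B) : Prop :=
  ∀ g' g : A, K.d g' = K.r g →
    G.d (φ g') = G.r (φ g) ∧ φ (K.mul g' g) = G.mul (φ g') (φ g)

/-- Each fiber restriction `φ_u : K_u → G_{φ(u)}` is injective. -/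
def FibInj (K : Gpd A) (φ : A → B) : Prop :=
  ∀ u ∈ K.unit, Set.InjOn φ (K.fiber u)

/-- Each fiber restriction `φ_u : K_u → G_{φ(u)}` is surjective. -/
def FibSurj (K : Gpd A) (G : Gpd B) (φ : A → B) : Prop :=
  ∀ u ∈ K.unit, ∀ h : B, G.d h = φ u → ∃ g ∈ K.fiber u, φ g = h

/-- Fibrewise bijective groupoid homomorphism. -/
def FibBij (K : Gpd A) (G : Gpd B) (φ : A → B) : Prop :=
  FibInj K φ ∧ FibSurj K G φ

end Gpd


/-- An idempotent with equal domain and range is a unit. -/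
lemma Gpd.unit_of_idem {B : Type*} (G : Gpd B) {e : B} (hdr : G.d e = G.r e)
    (h : G.mul e e = e) : e ∈ G.unit := by
  have h1 : G.mul (G.inv e) (G.mul e e) = G.mul (G.mul (G.inv e) e) e :=
    G.mul_assoc _ _ _ (G.d_inv e) hdr
  rw [h, G.inv_mul, hdr, G.left_unit] at h1
  rw [← h1]; exact G.r_mem e

/-- A homomorphism maps units to units. -/
lemma Gpd.hom_unit {A B : Type*} {K : Gpd A} {G : Gpd B} {φ : A → B}
    (hφ : Gpd.IsHom K G φ) {u : A} (hu : u ∈ K.unit) : φ u ∈ G.unit := by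
  obtain ⟨h1, h2⟩ := hφ u u (by rw [K.d_unit u hu, K.r_unit u hu])
  have : K.mul u u = u := by
    have := K.right_unit u; rwa [K.d_unit u hu] at this
  rw [this] at h2
  exact G.unit_of_idem h1 h2.symm

/-- A homomorphism commutes with `d`. -/
lemma Gpd.hom_d {A B : Type*} {K : Gpd A} {G : Gpd B} {φ : A → B}
    (hφ : Gpd.IsHom K G φ) (g : A) : φ (K.d g) = G.d (φ g) := by
  obtain ⟨h1, _⟩ := hφ g (K.d g) (by rw [K.r_unit _ (K.d_mem g)])
  have hu : φ (K.d g) ∈ G.unit := Gpd.hom_unit hφ (K.d_mem g)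
  rw [h1, G.r_unit _ hu]

/-- A homomorphism commutes with `r`. -/
lemma Gpd.hom_r {A B : Type*} {K : Gpd A} {G : Gpd B} {φ : A → B}
    (hφ : Gpd.IsHom K G φ) (g : A) : φ (K.r g) = G.r (φ g) := by
  obtain ⟨h1, _⟩ := hφ (K.r g) g (by rw [K.d_unit _ (K.r_mem g)])
  have hu : φ (K.r g) ∈ G.unit := Gpd.hom_unit hφ (K.r_mem g)
  rw [← h1, G.d_unit _ hu]

/-- For a fibrewise bijective groupoid homomorphism `φ : K → G` and subsets `U, V ⊆ G`,
`φ⁻¹(UV) = φ⁻¹(U)·φ⁻¹(V)`. -/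
theorem preimage_setMul {A B : Type*} (K : Gpd A) (G : Gpd B) (φ : A → B)
    (hφ : Gpd.IsHom K G φ) (hfb : Gpd.FibBij K G φ) (U V : Set B) :
    φ ⁻¹' (G.setMul U V) = K.setMul (φ ⁻¹' U) (φ ⁻¹' V) := by
  ext k
  constructor
  · rintro ⟨h, hU, h', hV, hcomp, hk⟩
    -- find b over K.d k with φ b = h'
    have hdk : G.d (φ k) = φ (K.d k) := (Gpd.hom_d hφ k).symm
    have hdk' : G.d h' = φ (K.d k) := by
      rw [← hdk, hk, G.d_mul _ _ hcomp]
    obtain ⟨b, hb, hφb⟩ := hfb.2 (K.d k) (K.d_mem k) h' hdk'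
    have hrb : G.d h = φ (K.r b) := by
      rw [Gpd.hom_r hφ b, hφb, hcomp]
    obtain ⟨a, ha, hφa⟩ := hfb.2 (K.r b) (K.r_mem b) h hrb
    have hab : K.d a = K.r b := ha
    have hmem : K.mul a b ∈ K.fiber (K.d k) := by
      show K.d (K.mul a b) = K.d k
      rw [K.d_mul _ _ hab]; exact hb
    have hkfib : k ∈ K.fiber (K.d k) := rfl
    have hφmul : φ (K.mul a b) = φ k := by
      rw [(hφ a b hab).2, hφa, hφb, ← hk]
    have hkeq : k = K.mul a b :=
      (hfb.1 (K.d k) (K.d_mem k) hmem hkfib hφmul).symm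
    exact ⟨a, by simpa [Set.mem_preimage, hφa] using hU,
      b, by simpa [Set.mem_preimage, hφb] using hV, hab, hkeq⟩
  · rintro ⟨a, ha, b, hb, hab, hk⟩
    obtain ⟨h1, h2⟩ := hφ a b hab
    exact ⟨φ a, ha, φ b, hb, h1, by rw [hk, h2]⟩
end

section
/- Let G and H be topological groupoids whose domain maps are local homeomorphisms (étale groupoids), and let φ : G → H be a continuous groupoid homomorphism. Then φ is an open map if and only if its restriction φ⁽⁰⁾ : G⁽⁰⁾ → H⁽⁰⁾ to unit spaces is an open map. -/
namespace Gpd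

variable {A B : Type*}

/-- A topological groupoid: the inverse map, the domain and range maps, and the
multiplication (on the set of composable pairs) are continuous. -/
def IsTopGpd [TopologicalSpace A] (G : Gpd A) : Prop :=
  Continuous G.inv ∧ Continuous G.d ∧ Continuous G.r ∧
    Continuous (fun p : {p : A × A // G.d p.1 = G.r p.2} => G.mul p.1.1 p.1.2)

/-- An étale groupoid: a topological groupoid whose domain map is a local
homeomorphism onto open subsets of the unit space (with its subspace topology). -/
def IsEtale [TopologicalSpace A] (G : Gpd A) : Prop :=
  IsTopGpd G ∧ ∀ g : A, ∃ V : Set A, IsOpen V ∧ g ∈ V ∧ Set.InjOn G.d V ∧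
    ∀ O : Set A, O ⊆ V → IsOpen O → ∃ W : Set A, IsOpen W ∧ G.d '' O = W ∩ G.unit

/-- The set of open bisections of a groupoid. -/
def Bis [TopologicalSpace A] (G : Gpd A) : Set (Set A) :=
  {U : Set A | IsOpen U ∧ G.IsBisection U}

end Gpd

namespace Gpd

variable {A B : Type*}

/-- An idempotent with equal domain and range is a unit. -/
lemma aux_idem_unit (G : Gpd A) {e : A} (hd : G.d e = G.r e) (he : G.mul e e = e) :
    e ∈ G.unit := by
  have h1 : G.mul (G.inv e) (G.mul e e) = G.mul (G.mul (G.inv e) e) e :=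
    G.mul_assoc _ _ _ (by rw [G.d_inv]) hd
  rw [he, G.inv_mul] at h1
  have h2 : G.mul (G.d e) e = e := by rw [hd]; exact G.left_unit e
  have h3 : e = G.d e := by rw [h1, h2]
  rw [h3]; exact G.d_mem e

/-- A groupoid homomorphism maps units to units. -/
lemma aux_hom_unit {K : Gpd A} {G : Gpd B} {φ : A → B} (hφ : IsHom K G φ)
    {u : A} (hu : u ∈ K.unit) : φ u ∈ G.unit := by
  have hcomp : K.d u = K.r u := by rw [K.d_unit u hu, K.r_unit u hu]
  obtain ⟨h1, h2⟩ := hφ u u hcomp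
  have hmul : K.mul u u = u := by
    have := K.left_unit u
    rwa [K.r_unit u hu] at this
  rw [hmul] at h2
  exact aux_idem_unit G h1 h2.symm

/-- A groupoid homomorphism commutes with the domain map. -/
lemma aux_hom_d {K : Gpd A} {G : Gpd B} {φ : A → B} (hφ : IsHom K G φ) (g : A) :
    G.d (φ g) = φ (K.d g) := by
  have hcomp : K.d g = K.r (K.d g) := (K.r_unit _ (K.d_mem g)).symm
  obtain ⟨h1, -⟩ := hφ g (K.d g) hcomp
  rw [h1, G.r_unit _ (aux_hom_unit hφ (K.d_mem g))]

/-- The unit space of an étale groupoid is open. -/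
lemma aux_unit_open [TopologicalSpace A] {G : Gpd A} (hG : G.IsEtale) :
    IsOpen G.unit := by
  rw [isOpen_iff_forall_mem_open]
  intro u hu
  obtain ⟨V, hVopen, huV, hinj, -⟩ := hG.2 u
  refine ⟨V ∩ G.d ⁻¹' V, ?_, hVopen.inter (hVopen.preimage hG.1.2.1), ?_⟩
  · rintro x ⟨hxV, hxd⟩
    have hx : x = G.d x := hinj hxV hxd (G.d_unit _ (G.d_mem x)).symm
    rw [hx]; exact G.d_mem x
  · exact ⟨huV, by simpa [Set.mem_preimage, G.d_unit u hu] using huV⟩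

end Gpd

/-- A continuous groupoid homomorphism between étale groupoids is open iff its restriction
to unit spaces is open (as a map between the unit spaces with their subspace topologies). -/
theorem open_iff_open_on_units {A B : Type*} [TopologicalSpace A] [TopologicalSpace B]
    (G : Gpd A) (H : Gpd B) (hG : Gpd.IsEtale G) (hH : Gpd.IsEtale H)
    (φ : A → B) (hφ : Gpd.IsHom G H φ) (hc : Continuous φ) :
    IsOpenMap φ ↔
      ∀ O : Set A, IsOpen O → ∃ W : Set B, IsOpen W ∧ φ '' (O ∩ G.unit) = W ∩ H.unit := by
  constructor
  · -- open map ⇒ open on units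
    intro hopen O hO
    refine ⟨φ '' (O ∩ G.unit), hopen _ (hO.inter (Gpd.aux_unit_open hG)), ?_⟩
    have hsub : φ '' (O ∩ G.unit) ⊆ H.unit := by
      rintro _ ⟨x, ⟨-, hxu⟩, rfl⟩
      exact Gpd.aux_hom_unit hφ hxu
    exact (Set.inter_eq_left.mpr hsub).symm
  · -- open on units ⇒ open map
    intro hyp O hO
    rw [isOpen_iff_forall_mem_open]
    rintro _ ⟨g, hgO, rfl⟩
    -- slice around φ g in H
    obtain ⟨VH, hVHopen, hφgVH, hinjH, -⟩ := hH.2 (φ g)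
    -- slice around g in G
    obtain ⟨V₀, hV₀open, hgV₀, hinjG, himg⟩ := hG.2 g
    set V : Set A := V₀ ∩ O ∩ φ ⁻¹' VH with hVdef
    have hVopen : IsOpen V := (hV₀open.inter hO).inter (hVHopen.preimage hc)
    have hgV : g ∈ V := ⟨⟨hgV₀, hgO⟩, hφgVH⟩
    obtain ⟨WG, hWGopen, hdV⟩ := himg V (fun x hx => hx.1.1) hVopen
    obtain ⟨W', hW'open, hφWG⟩ := hyp WG hWGopen
    -- the image of d '' V under φ is W' ∩ H.unit
    have key : φ '' (G.d '' V) = W' ∩ H.unit := by rw [hdV, hφWG]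
    refine ⟨VH ∩ H.d ⁻¹' W', ?_, hVHopen.inter (hW'open.preimage hH.1.2.1), ?_⟩
    · -- VH ∩ d⁻¹ W' ⊆ φ '' O
      rintro h ⟨hhVH, hhW'⟩
      have hdh : H.d h ∈ W' ∩ H.unit := ⟨hhW', H.d_mem h⟩
      rw [← key] at hdh
      obtain ⟨_, ⟨x, hxV, rfl⟩, hφdx⟩ := hdh
      have heq : H.d (φ x) = H.d h := by rw [Gpd.aux_hom_d hφ, hφdx]
      have : φ x = h := hinjH hxV.2 hhVH heq
      exact ⟨x, hxV.1.2, this⟩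
    · -- φ g ∈ VH ∩ d⁻¹ W'
      refine ⟨hφgVH, ?_⟩
      have : H.d (φ g) ∈ φ '' (G.d '' V) :=
        ⟨G.d g, ⟨g, hgV, rfl⟩, (Gpd.aux_hom_d hφ g).symm⟩
      rw [key] at this
      exact this.1
end

section
/- Let S and T be inverse semigroups and θ : S → T a semigroup homomorphism. Define θ* : Ê(T)₀ → Ê(S)₀ by θ*(ζ) = ζ ∘ θ on semigroup homomorphisms from idempotents to {0,1}, and let θ̂ be the induced partial map Ê(T) ⊃ θ*⁻¹(Ê(S)) → Ê(S). Then the pair (θ, θ̂) is a proper action morphism from the spectral action (S, Ê(S), β^S) to (T, Ê(T), β^T); in particular, θ̂⁻¹(U^S_s) = U^T_{θ(s)} for every s ∈ S, and β^S_s(θ̂(ζ)) = θ̂(β^T_{θ(s)}(ζ)) for all ζ ∈ θ̂⁻¹(U^S_s). -/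
open scoped Classical

/-- A character on the idempotent semilattice `E(S)` of a semigroup `S`, encoded as a
function `S → Bool` which is multiplicative on idempotents, vanishes off the idempotents,
and is nonzero. The character space `Ê(S)` is the set of such functions, with the
subspace topology of the product topology on `S → Bool`. -/
def IsChar {S : Type*} [Semigroup S] (z : S → Bool) : Prop :=
  (∀ e f : S, e * e = e → f * f = f → z (e * f) = (z e && z f)) ∧
  (∀ s : S, s * s ≠ s → z s = false) ∧
  (∃ e : S, e * e = e ∧ z e = true)

/-- The map `θ* : Ê(T)₀ → Ê(S)₀`, `ζ ↦ ζ ∘ θ`, in the chosen encoding. -/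
noncomputable def charPull {S T : Type*} [Semigroup S] [Semigroup T]
    (θ : S → T) (z : T → Bool) : S → Bool :=
  fun s => if s * s = s then z (θ s) else false

/-- The spectral action `β^S_s`, in the chosen encoding:
`β^S_s(ζ)(e) = ζ(s* e s)`. -/
noncomputable def specAct {S : Type*} [Semigroup S] (star : S → S) (s : S)
    (z : S → Bool) : S → Bool :=
  fun e => if e * e = e then z (star s * e * s) else false

section Aux

variable {M : Type*} [Semigroup M]

lemma idem_mul_idem (star : M → M)
    (h1 : ∀ s : M, s * star s * s = s ∧ star s * s * star s = star s)
    (h2 : ∀ s t : M, s * t * s = s → t * s * t = t → t = star s)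
    {e f : M} (he : e * e = e) (hf : f * f = f) :
    (e * f) * (e * f) = e * f := by
  set z := star (e * f) with hzdef
  have hz1 : (e * f) * z * (e * f) = e * f := (h1 _).1
  have hz2 : z * (e * f) * z = z := (h1 _).2
  have he' : ∀ x : M, e * (e * x) = e * x := fun x => by rw [← mul_assoc, he]
  have hf' : ∀ x : M, f * (f * x) = f * x := fun x => by rw [← mul_assoc, hf]
  have hz2' : ∀ x : M, z * (e * (f * (z * x))) = z * x := by
    intro x
    have := congrArg (· * x) hz2
    simpa [mul_assoc] using this
  have key : f * z * e = z := by
    apply h2 (e * f) (f * z * e)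
    · simp only [mul_assoc]
      rw [hf', he']
      simpa [mul_assoc] using hz1
    · simp only [mul_assoc]
      rw [he', hf', hz2']
  have hzz : z * z = z := by
    conv_lhs => rw [← key]
    simp only [mul_assoc]
    rw [hz2']
    simpa [mul_assoc] using key
  have h3 : e * f = star z := h2 z (e * f) hz2 hz1
  have h4 : z = star z := h2 z z (by rw [hzz, hzz]) (by rw [hzz, hzz])
  have hef : e * f = z := h3.trans h4.symm
  rw [hef]; exact hzz

lemma idem_comm (star : M → M)
    (h1 : ∀ s : M, s * star s * s = s ∧ star s * s * star s = star s)
    (h2 : ∀ s t : M, s * t * s = s → t * s * t = t → t = star s)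
    {e f : M} (he : e * e = e) (hf : f * f = f) :
    e * f = f * e := by
  have hef := idem_mul_idem star h1 h2 he hf
  have hfe := idem_mul_idem star h1 h2 hf he
  have he' : ∀ x : M, e * (e * x) = e * x := fun x => by rw [← mul_assoc, he]
  have hf' : ∀ x : M, f * (f * x) = f * x := fun x => by rw [← mul_assoc, hf]
  have h3 : f * e = star (e * f) := by
    apply h2 (e * f) (f * e)
    · simp only [mul_assoc]
      rw [hf', he']
      simpa [mul_assoc] using hef
    · simp only [mul_assoc]
      rw [he', hf']
      simpa [mul_assoc] using hfe
  have h4 : e * f = star (e * f) :=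
    h2 (e * f) (e * f) (by rw [hef, hef]) (by rw [hef, hef])
  rw [h3, ← h4]

end Aux

/-- For a homomorphism `θ : S → T` of inverse semigroups, the pair `(θ, θ̂)` is a proper
action morphism between the spectral actions: the domain `D_θ̂ = θ*⁻¹(Ê(S))` is open, `θ̂`
is continuous on it and proper, `θ̂⁻¹(U^S_s) = U^T_{θ(s)}` for every `s ∈ S`, and
`β^S_s(θ̂(ζ)) = θ̂(β^T_{θ(s)}(ζ))` for all `ζ ∈ θ̂⁻¹(U^S_s)`. -/
theorem spectral_proper_action_morphism
    {S T : Type*} [Semigroup S] [Semigroup T]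
    (starS : S → S) (starT : T → T)
    (hS : ∀ s : S, s * starS s * s = s ∧ starS s * s * starS s = starS s)
    (hS' : ∀ s t : S, s * t * s = s → t * s * t = t → t = starS s)
    (hT : ∀ s : T, s * starT s * s = s ∧ starT s * s * starT s = starT s)
    (hT' : ∀ s t : T, s * t * s = s → t * s * t = t → t = starT s)
    (θ : S → T) (hθ : ∀ s s' : S, θ (s * s') = θ s * θ s') :
    -- the domain of the induced partial map is open in Ê(T)
    IsOpen {ζ : {z : T → Bool // IsChar z} | IsChar (charPull θ ζ.1)} ∧
    -- θ̂ is continuous on its domain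
    ContinuousOn (fun ζ : {z : T → Bool // IsChar z} => charPull θ ζ.1)
      {ζ : {z : T → Bool // IsChar z} | IsChar (charPull θ ζ.1)} ∧
    -- θ̂ is proper: preimages of compact subsets of Ê(S) are compact
    (∀ C : Set {z : S → Bool // IsChar z}, IsCompact C →
      IsCompact {ζ : {z : T → Bool // IsChar z} |
        ∃ h : IsChar (charPull θ ζ.1), (⟨charPull θ ζ.1, h⟩ : {z : S → Bool // IsChar z}) ∈ C}) ∧
    -- θ̂⁻¹(U^S_s) = U^T_{θ(s)}
    (∀ s : S,
      {ζ : {z : T → Bool // IsChar z} | IsChar (charPull θ ζ.1) ∧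
          charPull θ ζ.1 (starS s * s) = true} =
        {ζ : {z : T → Bool // IsChar z} | ζ.1 (starT (θ s) * θ s) = true}) ∧
    -- equivariance on θ̂⁻¹(U^S_s)
    (∀ s : S, ∀ ζ : {z : T → Bool // IsChar z},
      ζ.1 (starT (θ s) * θ s) = true →
      specAct starS s (charPull θ ζ.1) = charPull θ (specAct starT (θ s) ζ.1)) := by
  -- θ maps idempotents to idempotents
  have hθidem : ∀ e : S, e * e = e → θ e * θ e = θ e := fun e he => by
    rw [← hθ, he]
  -- θ preserves star
  have hθstar : ∀ s : S, θ (starS s) = starT (θ s) := by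
    intro s
    apply hT'
    · rw [← hθ, ← hθ, (hS s).1]
    · rw [← hθ, ← hθ, (hS s).2]
  -- s* s is idempotent
  have hss : ∀ s : S, (starS s * s) * (starS s * s) = starS s * s := by
    intro s
    have h := (hS s).1
    calc (starS s * s) * (starS s * s) = starS s * (s * starS s * s) := by
          simp only [mul_assoc]
      _ = starS s * s := by rw [h]
  have htss : ∀ t : T, (starT t * t) * (starT t * t) = starT t * t := by
    intro t
    have h := (hT t).1
    calc (starT t * t) * (starT t * t) = starT t * (t * starT t * t) := by
          simp only [mul_assoc]
      _ = starT t * t := by rw [h]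
  -- conditions 1,2 of charPull, for any (weak) character z
  have hpull12 : ∀ z : T → Bool,
      (∀ e f : T, e * e = e → f * f = f → z (e * f) = (z e && z f)) →
      (∀ e f : S, e * e = e → f * f = f →
        charPull θ z (e * f) = (charPull θ z e && charPull θ z f)) ∧
      (∀ s : S, s * s ≠ s → charPull θ z s = false) := by
    intro z hzmul
    constructor
    · intro e f he hf
      have hef := idem_mul_idem starS hS hS' he hf
      simp only [charPull, if_pos he, if_pos hf, if_pos hef, hθ]
      exact hzmul _ _ (hθidem e he) (hθidem f hf)
    · intro s hs
      simp only [charPull, if_neg hs]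
  -- characterization of the domain
  have hdom : ∀ ζ : {z : T → Bool // IsChar z},
      IsChar (charPull θ ζ.1) ↔ ∃ e : S, e * e = e ∧ ζ.1 (θ e) = true := by
    intro ζ
    constructor
    · rintro ⟨-, -, e, he, hte⟩
      refine ⟨e, he, ?_⟩
      simpa only [charPull, if_pos he] using hte
    · rintro ⟨e, he, hte⟩
      obtain ⟨h1, h2⟩ := hpull12 ζ.1 ζ.2.1
      exact ⟨h1, h2, e, he, by simp only [charPull, if_pos he]; exact hte⟩
  refine ⟨?_, ?_, ?_, ?_, ?_⟩
  · -- openness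
    have : {ζ : {z : T → Bool // IsChar z} | IsChar (charPull θ ζ.1)} =
        ⋃ e : S, ⋃ _ : e * e = e, {ζ : {z : T → Bool // IsChar z} | ζ.1 (θ e) = true} := by
      ext ζ
      simp only [Set.mem_setOf_eq, Set.mem_iUnion, hdom ζ]
      tauto
    rw [this]
    refine isOpen_iUnion fun e => isOpen_iUnion fun he => ?_
    have hcont : Continuous fun ζ : {z : T → Bool // IsChar z} => ζ.1 (θ e) :=
      (continuous_apply (θ e)).comp continuous_subtype_val
    exact (isOpen_discrete {true}).preimage hcont
  · -- continuity
    apply Continuous.continuousOn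
    apply continuous_pi
    intro s
    by_cases hs : s * s = s
    · simp only [charPull, if_pos hs]
      exact (continuous_apply (θ s)).comp continuous_subtype_val
    · simp only [charPull, if_neg hs]
      exact continuous_const
  · -- properness
    intro C hC
    set C' : Set (S → Bool) := Subtype.val '' C with hC'def
    have hC'cpt : IsCompact C' := hC.image continuous_subtype_val
    have hC'closed : IsClosed C' := hC'cpt.isClosed
    have hcpull : Continuous fun z : T → Bool => charPull θ z := by
      apply continuous_pi
      intro s
      by_cases hs : s * s = s
      · simp only [charPull, if_pos hs]
        exact continuous_apply (θ s)
      · simp only [charPull, if_neg hs]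
        exact continuous_const
    set K' : Set (T → Bool) := {z | (∀ e f : T, e * e = e → f * f = f →
        z (e * f) = (z e && z f)) ∧ (∀ s : T, s * s ≠ s → z s = false) ∧
        charPull θ z ∈ C'} with hK'def
    have hK'closed : IsClosed K' := by
      have hA : IsClosed {z : T → Bool | ∀ e f : T, e * e = e → f * f = f →
          z (e * f) = (z e && z f)} := by
        have : {z : T → Bool | ∀ e f : T, e * e = e → f * f = f →
            z (e * f) = (z e && z f)} =
            ⋂ e : T, ⋂ f : T, ⋂ _ : e * e = e, ⋂ _ : f * f = f,
              {z : T → Bool | z (e * f) = (z e && z f)} := by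
          ext z; simp only [Set.mem_setOf_eq, Set.mem_iInter]
        rw [this]
        refine isClosed_iInter fun e => isClosed_iInter fun f =>
          isClosed_iInter fun _ => isClosed_iInter fun _ => ?_
        refine isClosed_eq (continuous_apply (e * f)) ?_
        have hrw : (fun z : T → Bool => (z e && z f)) =
            (fun p : Bool × Bool => p.1 && p.2) ∘ (fun z => (z e, z f)) := rfl
        rw [hrw]
        exact continuous_of_discreteTopology.comp
          ((continuous_apply e).prodMk (continuous_apply f))
      have hB : IsClosed {z : T → Bool | ∀ s : T, s * s ≠ s → z s = false} := by
        have : {z : T → Bool | ∀ s : T, s * s ≠ s → z s = false} =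
            ⋂ s : T, ⋂ _ : s * s ≠ s, {z : T → Bool | z s = false} := by
          ext z; simp only [Set.mem_setOf_eq, Set.mem_iInter]
        rw [this]
        refine isClosed_iInter fun s => isClosed_iInter fun _ => ?_
        exact isClosed_eq (continuous_apply s) continuous_const
      have hD : IsClosed {z : T → Bool | charPull θ z ∈ C'} :=
        hC'closed.preimage hcpull
      have : K' = {z : T → Bool | ∀ e f : T, e * e = e → f * f = f →
          z (e * f) = (z e && z f)} ∩
          ({z : T → Bool | ∀ s : T, s * s ≠ s → z s = false} ∩
           {z : T → Bool | charPull θ z ∈ C'}) := by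
        ext z; simp only [hK'def, Set.mem_setOf_eq, Set.mem_inter_iff]
      rw [this]
      exact hA.inter (hB.inter hD)
    have hK'cpt : IsCompact K' := hK'closed.isCompact
    have hchar_of_mem : ∀ z : T → Bool, z ∈ K' → IsChar z := by
      rintro z ⟨hz1, hz2, hz3⟩
      obtain ⟨w, -, hw⟩ := hz3
      obtain ⟨-, -, e, he, hte⟩ : IsChar (charPull θ z) := hw ▸ w.2
      refine ⟨hz1, hz2, θ e, hθidem e he, ?_⟩
      simpa only [charPull, if_pos he] using hte
    have hsub : K' ⊆ Set.range (Subtype.val : {z : T → Bool // IsChar z} → T → Bool) := by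
      intro z hz
      exact ⟨⟨z, hchar_of_mem z hz⟩, rfl⟩
    have hsetEq : {ζ : {z : T → Bool // IsChar z} |
        ∃ h : IsChar (charPull θ ζ.1), (⟨charPull θ ζ.1, h⟩ : {z : S → Bool // IsChar z}) ∈ C} =
        Subtype.val ⁻¹' K' := by
      ext ζ
      simp only [Set.mem_setOf_eq, Set.mem_preimage, hK'def, Set.mem_setOf_eq]
      constructor
      · rintro ⟨h, hmem⟩
        exact ⟨ζ.2.1, ζ.2.2.1, ⟨_, hmem, rfl⟩⟩
      · rintro ⟨h1, h2, w, hwC, hw⟩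
        have hchar : IsChar (charPull θ ζ.1) := hw ▸ w.2
        refine ⟨hchar, ?_⟩
        have : (⟨charPull θ ζ.1, hchar⟩ : {z : S → Bool // IsChar z}) = w :=
          Subtype.ext hw.symm
        rw [this]; exact hwC
    rw [hsetEq]
    exact Topology.IsEmbedding.subtypeVal.toIsInducing.isCompact_preimage' hK'cpt hsub
  · -- preimage of U^S_s
    intro s
    ext ζ
    simp only [Set.mem_setOf_eq]
    have hkey : charPull θ ζ.1 (starS s * s) = ζ.1 (starT (θ s) * θ s) := by
      simp only [charPull, if_pos (hss s), hθ, hθstar]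
    constructor
    · rintro ⟨-, h⟩
      rw [← hkey]; exact h
    · intro h
      refine ⟨(hdom ζ).2 ⟨starS s * s, hss s, ?_⟩, hkey.trans h⟩
      rw [hθ, hθstar]; exact h
  · -- equivariance
    intro s ζ hζ
    funext e
    by_cases he : e * e = e
    · -- s* e s is idempotent in S
      have hse : (starS s * e * s) * (starS s * e * s) = starS s * e * s := by
        have hcomm : e * (s * starS s) = (s * starS s) * e := by
          apply idem_comm starS hS hS' he
          have h := (hS s).2
          calc (s * starS s) * (s * starS s) = s * (starS s * s * starS s) := by
                simp only [mul_assoc]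
            _ = s * starS s := by rw [h]
        calc (starS s * e * s) * (starS s * e * s)
            = starS s * (e * (s * starS s) * (e * s)) := by simp only [mul_assoc]
          _ = starS s * ((s * starS s) * e * (e * s)) := by rw [hcomm]
          _ = starS s * (s * (starS s * (e * (e * s)))) := by simp only [mul_assoc]
          _ = starS s * (s * (starS s * (e * s))) := by rw [← mul_assoc e e s, he]
          _ = (starS s * s * starS s) * (e * s) := by simp only [mul_assoc]
          _ = starS s * e * s := by rw [(hS s).2]; simp only [mul_assoc]
      have hte : θ e * θ e = θ e := hθidem e he
      simp only [specAct, charPull, if_pos he, if_pos hse, if_pos hte, hθ, hθstar]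
    · simp only [specAct, charPull, if_neg he]
end

section
/- Let G be an étale groupoid with slice action (Bis G, G⁽⁰⁾, γ^G), where for U ∈ Bis G the partial homeomorphism γ^G_U : d(U) → r(U) is r|_U ∘ (d|_U)⁻¹. Then the map ω_G : Bis G ⋉_{γ^G} G⁽⁰⁾ → G sending the class [U, u] to the unique element g ∈ U with d(g) = u is a well-defined groupoid isomorphism and a homeomorphism. -/
namespace Gpd

variable {A : Type*} [TopologicalSpace A]

/-- Representatives of arrows of the transformation groupoid `Bis G ⋉ G⁽⁰⁾` of the slice
action: pairs `(U, u)` of an open bisection `U` and a point `u ∈ d(U) = D^{γ}_U`. -/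
def SlicePt (G : Gpd A) : Type _ :=
  {p : Set A × A // IsOpen p.1 ∧ G.IsBisection p.1 ∧ p.2 ∈ G.d '' p.1}

/-- The relation defining the transformation groupoid: `(U,u) ∼ (V,v)` iff `u = v` and
there is an idempotent `W` of `Bis G` (an open subset of the unit space) with `u ∈ W` and
`U·W = V·W`. -/
def SliceRel (G : Gpd A) (p q : SlicePt G) : Prop :=
  p.1.2 = q.1.2 ∧ ∃ W : Set A, IsOpen W ∧ W ⊆ G.unit ∧ p.1.2 ∈ W ∧
    G.setMul p.1.1 W = G.setMul q.1.1 W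

/-- The generating open sets `[U, O]` of the topology of the transformation groupoid,
for `U` an open bisection and `O` an open subset of `d(U)`. -/
def SliceBasic (G : Gpd A) : Set (Set (Quot (SliceRel G))) :=
  {B | ∃ U O : Set A, IsOpen U ∧ G.IsBisection U ∧ IsOpen O ∧ O ⊆ G.d '' U ∧
    B = {k | ∃ (u : A) (_ : u ∈ O)
      (hp : IsOpen U ∧ G.IsBisection U ∧ u ∈ G.d '' U),
      k = Quot.mk (SliceRel G) ⟨(U, u), hp⟩}}

/-- The topology of the transformation groupoid of the slice action. -/
instance sliceTop (G : Gpd A) : TopologicalSpace (Quot (SliceRel G)) :=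
  TopologicalSpace.generateFrom (SliceBasic G)

/-! For `g ∈ U` in an open bisection, `(U, d g)` represents the unique class mapped to `g`, so
`ω_G` is well defined and surjective. Two representatives `(U, u)`, `(V, u)` with the same
image `g` agree on the open neighbourhood `d(U ∩ V)` of `u` (the domain map of an étale groupoid
is open), which is injectivity. The topology of `Bis G ⋉ G⁽⁰⁾` is generated by the sets
`[U, O]`, and `ω_G` maps `[U, O]` onto the open set `U ∩ d⁻¹(O)`; conversely every open
neighbourhood of `g ∈ U` contains such an image, with `U` shrunk. -/

open Set TopologicalSpace

theorem isOpenMap_of_bijective_of_eq_generateFrom {X Y : Type*} [tX : TopologicalSpace X]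
    [TopologicalSpace Y] {S : Set (Set X)} (hX : tX = .generateFrom S) {f : X → Y}
    (hf : Function.Bijective f) (himage : ∀ s ∈ S, IsOpen (f '' s)) : IsOpenMap f := by
  set e := Equiv.ofBijective f hf
  have he : ∀ s, f '' s = e.symm ⁻¹' s := e.image_eq_preimage_symm
  have hcont : Continuous e.symm := by
    subst hX
    exact continuous_generateFrom_iff.2 fun s hs => he s ▸ himage s hs
  exact fun s hs => he s ▸ hs.preimage hcont

theorem inv_inv {X : Type*} (G : Gpd X) (g : X) : G.inv (G.inv g) = g :=
  calc G.inv (G.inv g)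
      = G.mul (G.mul g (G.inv g)) (G.inv (G.inv g)) := by
        rw [G.mul_inv, ← G.d_inv, ← G.r_inv, G.left_unit]
    _ = G.mul g (G.mul (G.inv g) (G.inv (G.inv g))) :=
        (G.mul_assoc _ _ _ (G.r_inv g).symm (G.r_inv (G.inv g)).symm).symm
    _ = g := by rw [G.mul_inv, G.r_inv, G.right_unit]

theorem inv_injective {X : Type*} (G : Gpd X) : Function.Injective G.inv :=
  Function.LeftInverse.injective G.inv_inv

theorem setMul_eq_inter_preimage_d {X : Type*} (G : Gpd X) (U : Set X) {W : Set X}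
    (hW : W ⊆ G.unit) : G.setMul U W = U ∩ G.d ⁻¹' W := by
  ext g
  constructor
  · rintro ⟨a, ha, w, hw, hdw, rfl⟩
    have hda : G.d a = w := by rw [hdw, G.r_unit w (hW hw)]
    rw [← hda, G.right_unit]
    exact ⟨ha, show G.d a ∈ W from hda ▸ hw⟩
  · rintro ⟨hg, hdg⟩
    exact ⟨g, hg, G.d g, hdg, (G.r_unit _ (G.d_mem g)).symm, (G.right_unit g).symm⟩

section Etale

variable {G : Gpd A}

theorem IsEtale.exists_isOpen_isBisection_mem (hG : G.IsEtale) (g : A) :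
    ∃ U, IsOpen U ∧ G.IsBisection U ∧ g ∈ U := by
  obtain ⟨V, hVo, hgV, hdV, -⟩ := hG.2 g
  obtain ⟨V', hV'o, hgV', hdV', -⟩ := hG.2 (G.inv g)
  refine ⟨V ∩ G.inv ⁻¹' V', hVo.inter (hV'o.preimage hG.1.1),
    ⟨hdV.mono inter_subset_left, fun a ha b hb hab => ?_⟩, hgV, hgV'⟩
  exact G.inv_injective (hdV' ha.2 hb.2 (by rw [G.d_inv, G.d_inv, hab]))

/-- A point of an open set `U` on which `d` is injective is a unit iff its domain lies in `U`,
so `U ∩ d⁻¹(U)` is an open neighbourhood of each unit in `U` consisting of units. -/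
theorem IsEtale.isOpen_unit (hG : G.IsEtale) : IsOpen G.unit := by
  refine isOpen_iff_forall_mem_open.2 fun u hu => ?_
  obtain ⟨U, hUo, huU, hdU, -⟩ := hG.2 u
  refine ⟨U ∩ G.d ⁻¹' U, fun g ⟨hg, hdg⟩ => ?_, hUo.inter (hUo.preimage hG.1.2.1), huU, ?_⟩
  · rw [← hdU hdg hg (G.d_unit _ (G.d_mem g))]
    exact G.d_mem g
  · rwa [mem_preimage, G.d_unit u hu]

theorem IsEtale.isOpenMap_d (hG : G.IsEtale) : IsOpenMap G.d := by
  refine fun O hO => isOpen_iff_forall_mem_open.2 ?_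
  rintro _ ⟨g, hgO, rfl⟩
  obtain ⟨V, hVo, hgV, -, himage⟩ := hG.2 g
  obtain ⟨W, hWo, hW⟩ := himage (O ∩ V) inter_subset_right (hO.inter hVo)
  exact ⟨G.d '' (O ∩ V), image_mono inter_subset_left, hW ▸ hWo.inter hG.isOpen_unit,
    g, ⟨hgO, hgV⟩, rfl⟩

end Etale

namespace SlicePt

variable {G : Gpd A}

/-- `ω_G [U, u]`, the element of `U` with domain `u`. -/
noncomputable def arrow (p : SlicePt G) : A := p.2.2.2.choose

theorem arrow_mem (p : SlicePt G) : p.arrow ∈ p.1.1 := p.2.2.2.choose_spec.1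

theorem d_arrow (p : SlicePt G) : G.d p.arrow = p.1.2 := p.2.2.2.choose_spec.2

theorem arrow_eq_of_mem (p : SlicePt G) {g : A} (hg : g ∈ p.1.1) (hdg : G.d g = p.1.2) :
    p.arrow = g :=
  p.2.2.1.1 p.arrow_mem hg (by rw [p.d_arrow, hdg])

theorem arrow_eq_of_sliceRel {p q : SlicePt G} (h : SliceRel G p q) : p.arrow = q.arrow := by
  obtain ⟨hpq, W, -, hW, hpW, hUV⟩ := h
  have hp : p.arrow ∈ G.setMul q.1.1 W := by
    rw [← hUV, G.setMul_eq_inter_preimage_d _ hW]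
    exact ⟨p.arrow_mem, by rwa [mem_preimage, p.d_arrow]⟩
  rw [G.setMul_eq_inter_preimage_d _ hW] at hp
  exact (q.arrow_eq_of_mem hp.1 (by rw [p.d_arrow, hpq])).symm

theorem sliceRel_of_arrow_eq (hG : G.IsEtale) {p q : SlicePt G} (h : p.arrow = q.arrow) :
    SliceRel G p q := by
  have hUV : ∀ p q : SlicePt G, p.1.1 ∩ G.d ⁻¹' (G.d '' (p.1.1 ∩ q.1.1)) ⊆ q.1.1 := by
    rintro p q g ⟨hg, a, ha, hda⟩
    rw [p.2.2.1.1 hg ha.1 hda.symm]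
    exact ha.2
  have hu : p.1.2 = q.1.2 := by rw [← p.d_arrow, ← q.d_arrow, h]
  have hW : G.d '' (p.1.1 ∩ q.1.1) ⊆ G.unit := image_subset_iff.2 fun g _ => G.d_mem g
  refine ⟨hu, G.d '' (p.1.1 ∩ q.1.1), hG.isOpenMap_d _ (p.2.1.inter q.2.1), hW,
    ⟨p.arrow, ⟨p.arrow_mem, h ▸ q.arrow_mem⟩, p.d_arrow⟩, ?_⟩
  rw [G.setMul_eq_inter_preimage_d _ hW, G.setMul_eq_inter_preimage_d _ hW]
  refine Subset.antisymm (subset_inter (hUV p q) inter_subset_right) ?_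
  rw [inter_comm p.1.1 q.1.1]
  exact subset_inter (hUV q p) inter_subset_right

end SlicePt

noncomputable def omega (G : Gpd A) : Quot (SliceRel G) → A :=
  Quot.lift SlicePt.arrow fun _ _ => SlicePt.arrow_eq_of_sliceRel

section Omega

variable {G : Gpd A}

theorem omega_injective (hG : G.IsEtale) : Function.Injective G.omega := by
  rintro ⟨p⟩ ⟨q⟩ h
  exact Quot.sound (SlicePt.sliceRel_of_arrow_eq hG h)

theorem omega_surjective (hG : G.IsEtale) : Function.Surjective G.omega := by
  intro g
  obtain ⟨U, hUo, hU, hgU⟩ := hG.exists_isOpen_isBisection_mem g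
  let p : SlicePt G := ⟨(U, G.d g), hUo, hU, g, hgU, rfl⟩
  exact ⟨Quot.mk _ p, p.arrow_eq_of_mem hgU rfl⟩

theorem omega_mk_setMul (p q : SlicePt G)
    (hpq : IsOpen (G.setMul p.1.1 q.1.1) ∧ G.IsBisection (G.setMul p.1.1 q.1.1) ∧
      q.1.2 ∈ G.d '' (G.setMul p.1.1 q.1.1))
    (hcomp : p.1.2 = G.r (G.omega (Quot.mk _ q))) :
    G.omega (Quot.mk _ ⟨(G.setMul p.1.1 q.1.1, q.1.2), hpq⟩) =
      G.mul (G.omega (Quot.mk _ p)) (G.omega (Quot.mk _ q)) := by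
  have hcomp' : G.d p.arrow = G.r q.arrow := p.d_arrow.trans hcomp
  exact SlicePt.arrow_eq_of_mem (G := G) ⟨_, hpq⟩ ⟨_, p.arrow_mem, _, q.arrow_mem, hcomp', rfl⟩
    ((G.d_mul _ _ hcomp').trans q.d_arrow)

theorem omega_image_sliceBasic {U O : Set A} (hUo : IsOpen U) (hU : G.IsBisection U) :
    G.omega '' {k | ∃ (u : A) (_ : u ∈ O) (hp : IsOpen U ∧ G.IsBisection U ∧ u ∈ G.d '' U),
      k = Quot.mk (SliceRel G) ⟨(U, u), hp⟩} = U ∩ G.d ⁻¹' O := by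
  ext g
  constructor
  · rintro ⟨_, ⟨u, hu, hp, rfl⟩, rfl⟩
    let p : SlicePt G := ⟨(U, u), hp⟩
    exact ⟨p.arrow_mem, show G.d p.arrow ∈ O from p.d_arrow ▸ hu⟩
  · rintro ⟨hgU, hgO⟩
    let p : SlicePt G := ⟨(U, G.d g), hUo, hU, g, hgU, rfl⟩
    exact ⟨Quot.mk _ p, ⟨G.d g, hgO, p.2, rfl⟩, p.arrow_eq_of_mem hgU rfl⟩

theorem continuous_omega (hG : G.IsEtale) : Continuous G.omega := by
  refine continuous_def.2 fun O hO => isOpen_iff_forall_mem_open.2 ?_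
  rintro ⟨p⟩ hpO
  set U := O ∩ p.1.1
  have hUo : IsOpen U := hO.inter p.2.1
  have hU : G.IsBisection U :=
    ⟨p.2.2.1.1.mono inter_subset_right, p.2.2.1.2.mono inter_subset_right⟩
  have hpU : p.arrow ∈ U := ⟨hpO, p.arrow_mem⟩
  have hp' : IsOpen U ∧ G.IsBisection U ∧ p.1.2 ∈ G.d '' U := ⟨hUo, hU, _, hpU, p.d_arrow⟩
  refine ⟨_, ?_, isOpen_generateFrom_of_mem
    ⟨U, G.d '' U, hUo, hU, hG.isOpenMap_d U hUo, subset_rfl, rfl⟩, p.1.2, hp'.2.2, hp', ?_⟩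
  · rintro _ ⟨u, -, hu, rfl⟩
    exact (SlicePt.arrow_mem ⟨(U, u), hu⟩).1
  · exact G.omega_injective hG (SlicePt.arrow_eq_of_mem ⟨(U, p.1.2), hp'⟩ hpU p.d_arrow).symm

theorem isOpenMap_omega (hG : G.IsEtale) : IsOpenMap G.omega := by
  refine isOpenMap_of_bijective_of_eq_generateFrom rfl
    ⟨G.omega_injective hG, G.omega_surjective hG⟩ ?_
  rintro _ ⟨U, O, hUo, hU, hO, -, rfl⟩
  rw [omega_image_sliceBasic hUo hU]
  exact hUo.inter (hO.preimage hG.1.2.1)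

end Omega

/-- For an étale groupoid `G`, the map `ω_G : Bis G ⋉_{γ^G} G⁽⁰⁾ → G` sending the class
`[U, u]` to the unique `g ∈ U` with `d(g) = u` is a well-defined groupoid isomorphism
and a homeomorphism: there is a map `ω` on the quotient whose value on each class `[U,u]`
is an element of `U` with domain `u` (well-definedness), which is bijective, preserves
the groupoid multiplication (`ω([V][U,u]) = ω([V]) ω([U,u])` for composable classes),
and is continuous and open. -/
theorem slice_transformation_iso (G : Gpd A) (hG : G.IsEtale) :
    ∃ ω : Quot (SliceRel G) → A,
      (∀ p : SlicePt G,
        ω (Quot.mk (SliceRel G) p) ∈ p.1.1 ∧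
        G.d (ω (Quot.mk (SliceRel G) p)) = p.1.2) ∧
      Function.Bijective ω ∧
      (∀ p q : SlicePt G,
        ∀ hpq : IsOpen (G.setMul p.1.1 q.1.1) ∧ G.IsBisection (G.setMul p.1.1 q.1.1) ∧
          q.1.2 ∈ G.d '' (G.setMul p.1.1 q.1.1),
        p.1.2 = G.r (ω (Quot.mk (SliceRel G) q)) →
        ω (Quot.mk (SliceRel G) ⟨(G.setMul p.1.1 q.1.1, q.1.2), hpq⟩) =
          G.mul (ω (Quot.mk (SliceRel G) p)) (ω (Quot.mk (SliceRel G) q))) ∧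
      Continuous ω ∧ IsOpenMap ω :=
  ⟨G.omega, fun p => ⟨p.arrow_mem, p.d_arrow⟩, ⟨omega_injective hG, omega_surjective hG⟩,
    omega_mk_setMul, continuous_omega hG, isOpenMap_omega hG⟩

end Gpd
end
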